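/- arXiv:2202.06618 — 2 statements merged into one kernel-verified Lean document; each statement's English description precedes it below -/
import Mathlib

section
/- Fix d ∈ ℕ and L > 0, and let p ∈ 𝒫_L with p_max, C₁, C₂, K_max all finite. For each N, let X₁,…,X_N be i.i.d. samples from p and X'₁,…,X'_{M(N)} i.i.d. samples from p independent of the former, and let Ĥ(𝒟; w) = −(1/N) Σ_{n=1}^N log p̂(X_n; w) be the plug-in entropy estimate based on the Parzen–Rosenblatt estimator p̂(x; w) = (1/(M wᵈ)) Σ_{m=1}^M κ((x − X'_m)/w). If the bandwidths w = w(N) → 0 and sample sizes M = M(N) → ∞ are chosen so that N·w(N) → 0 and N² log N/(w(N)^{2d} M(N)) → 0 as N → ∞, then |Ĥ(𝒟; w(N)) − h(X)| → 0 in probability; i.e., for every δ > 0 and ε > 0 there exists N₀ such that for all N ≥ N₀, Pr(|Ĥ(𝒟; w(N)) − h(X)| > ε) ≤ δ. -/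
/-!
Split `Ĥ + ∫ p log p` into `-(1/N) ∑ₙ (log p̂(Xₙ) - log p(Xₙ))` and the Monte Carlo error of
`(1/N) ∑ₙ log p(Xₙ)`; the latter is small by Chebyshev since `C₁ < ∞`. The first term is at most
`4γ` as soon as `|p̂(Xₙ) - p(Xₙ)| ≤ 2γ p(Xₙ)` for every `n`, which can fail only if
* some `p(Xₙ) < 1/N`, of probability at most `N ∫_{p < 1/N} p → 0` (dominated convergence);
* the bias `|E p̂(x) - p(x)| ≤ C₂ w` exceeds `γ/N`, excluded once `C₂ N w ≤ γ`;
* some `p̂(Xₙ)` is `γ/N` away from its mean. Conditionally on `Xₙ`, which is independent of the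
  `X'ₘ`, this is Chebyshev for `M` i.i.d. kernel values of second moment `≤ K_max p_max / wᵈ`;
  the union over `n` costs `K_max p_max N³ / (γ² M wᵈ)`, and
  `N³ / (M wᵈ) ≤ N² log N / (w^{2d} M) · N w → 0`.
-/

open MeasureTheory ProbabilityTheory Filter

/-- The Parzen–Rosenblatt kernel density estimator
`p̂(x; w) = (1/(M wᵈ)) ∑ₘ κ((x - X'ₘ)/w)` built from samples `X'₁, …, X'_M`. -/
noncomputable def parzen {Ω : Type} {d M : ℕ} (w : ℝ) (κ : (Fin d → ℝ) → ℝ)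
    (X' : Fin M → Ω → (Fin d → ℝ)) (x : Fin d → ℝ) (ω : Ω) : ℝ :=
  (1 / ((M : ℝ) * w ^ d)) * ∑ m, κ (w⁻¹ • (x - X' m ω))

/-- The plug-in entropy estimate `Ĥ(𝒟; w) = -(1/N) ∑ₙ log p̂(Xₙ; w)`. -/
noncomputable def entropyEstimate {Ω : Type} {d N M : ℕ} (w : ℝ) (κ : (Fin d → ℝ) → ℝ)
    (X : Fin N → Ω → (Fin d → ℝ)) (X' : Fin M → Ω → (Fin d → ℝ)) (ω : Ω) : ℝ :=
  -(1 / (N : ℝ)) * ∑ n, Real.log (parzen w κ X' (X n ω) ω)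

open Topology

theorem le_of_isGreatest_image_of_eq_zero {α : Type*} {f : α → ℝ} {S : Set α} {a : ℝ}
    (h0 : ∀ x, 0 ≤ f x) (hS : ∀ x, x ∉ S → f x = 0) (ha : IsGreatest (f '' S) a) (x : α) :
    f x ≤ a := by
  by_cases hx : x ∈ S
  · exact ha.2 ⟨x, hx, rfl⟩
  · obtain ⟨y, hy, rfl⟩ := ha.1
    exact hS x hx ▸ h0 y

theorem abs_log_sub_log_le_of_abs_sub_le {a b r : ℝ} (hb : 0 < b) (hr : r ≤ 1 / 2)
    (hab : |a - b| ≤ r * b) : |Real.log a - Real.log b| ≤ 2 * r := by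
  obtain ⟨hab₁, hab₂⟩ := abs_le.1 hab
  have ha : b / 2 ≤ a := by nlinarith
  have ha0 : 0 < a := by linarith
  rw [abs_le]
  constructor
  · have h : Real.log b - Real.log a ≤ b / a - 1 := by
      rw [← Real.log_div hb.ne' ha0.ne']
      exact Real.log_le_sub_one_of_pos (by positivity)
    have : b / a - 1 ≤ 2 * r := by
      rw [div_sub_one ha0.ne', div_le_iff₀ ha0]
      nlinarith
    linarith
  · have h : Real.log a - Real.log b ≤ a / b - 1 := by
      rw [← Real.log_div ha0.ne' hb.ne']
      exact Real.log_le_sub_one_of_pos (by positivity)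
    have : a / b - 1 ≤ r := by
      rw [div_sub_one hb.ne', div_le_iff₀ hb]
      linarith
    nlinarith

theorem abs_average_log_sub_le {ι : Type*} [Fintype ι] {a b : ι → ℝ} {r : ℝ} (hr0 : 0 ≤ r)
    (hr : r ≤ 1 / 2) (hb : ∀ i, 0 < b i) (hab : ∀ i, |a i - b i| ≤ r * b i) :
    |(Fintype.card ι : ℝ)⁻¹ * ∑ i, Real.log (a i) - (Fintype.card ι : ℝ)⁻¹ * ∑ i, Real.log (b i)|
      ≤ 2 * r := by
  set n : ℝ := (Fintype.card ι : ℝ)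
  rw [← mul_sub, ← Finset.sum_sub_distrib, abs_mul, abs_of_nonneg (by positivity)]
  calc n⁻¹ * |∑ i, (Real.log (a i) - Real.log (b i))|
      ≤ n⁻¹ * ∑ _i : ι, 2 * r := by
        gcongr
        exact (Finset.abs_sum_le_sum_abs _ _).trans
          (Finset.sum_le_sum fun i _ => abs_log_sub_log_le_of_abs_sub_le (hb i) hr (hab i))
    _ = n⁻¹ * n * (2 * r) := by simp [n, mul_assoc]
    _ ≤ 2 * r := mul_le_of_le_one_left (by positivity) inv_mul_le_one

theorem setOf_lt_abs_entropyEstimate_sub_subset {d N M : ℕ} {Ω : Type}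
    {p κ q : (Fin d → ℝ) → ℝ} {X : Fin N → Ω → (Fin d → ℝ)} {X' : Fin M → Ω → (Fin d → ℝ)}
    {w γ η ε I : ℝ} (hN : 0 < N) (hγ : 0 ≤ γ) (hγ4 : γ ≤ 1 / 4) (hε : 4 * γ + η ≤ ε)
    (hq : ∀ x, |q x - p x| ≤ γ / N) :
    {ω | ε < |entropyEstimate w κ X X' ω - -I|}
      ⊆ (⋃ n, X n ⁻¹' {y | p y < (N : ℝ)⁻¹})
        ∪ (⋃ n, {ω | γ / N ≤ |parzen w κ X' (X n ω) ω - q (X n ω)|})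
        ∪ {ω | η ≤ |(N : ℝ)⁻¹ * ∑ n, Real.log (p (X n ω)) - I|} := by
  -- Off the first two events every `parzen` value is within a factor `1 ± 2γ` of `p`, so its
  -- logarithm is within `4γ`; off the third the average of `log p` is within `η` of `I`.
  intro ω hω
  by_contra hout
  simp only [Set.mem_union, Set.mem_iUnion, Set.mem_preimage, Set.mem_ofPred_eq, not_or,
    not_exists, not_lt, not_le] at hout hω
  obtain ⟨⟨hlow, hconc⟩, hlln⟩ := hout
  have hN' : (0 : ℝ) < N := Nat.cast_pos.2 hN
  have hclose : ∀ n, |parzen w κ X' (X n ω) ω - p (X n ω)| ≤ 2 * γ * p (X n ω) := fun n =>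
    calc |parzen w κ X' (X n ω) ω - p (X n ω)|
        ≤ |parzen w κ X' (X n ω) ω - q (X n ω)| + |q (X n ω) - p (X n ω)| := abs_sub_le _ _ _
      _ ≤ γ / N + γ / N := add_le_add (hconc n).le (hq (X n ω))
      _ = 2 * γ * (N : ℝ)⁻¹ := by ring
      _ ≤ 2 * γ * p (X n ω) := by gcongr; exact hlow n
  have hlog := abs_average_log_sub_le (by positivity) (by linarith)
    (fun n => (inv_pos.2 hN').trans_le (hlow n)) hclose
  simp only [Fintype.card_fin] at hlog
  set A := (N : ℝ)⁻¹ * ∑ n, Real.log (parzen w κ X' (X n ω) ω)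
  set B := (N : ℝ)⁻¹ * ∑ n, Real.log (p (X n ω))
  have hsplit : entropyEstimate w κ X X' ω - -I = -(A - B) - (B - I) := by
    rw [entropyEstimate, one_div]; ring
  rw [hsplit] at hω
  linarith [abs_sub (-(A - B)) (B - I), abs_neg (A - B)]

theorem tendsto_cube_div_mul_pow {d : ℕ} (hd : 0 < d) {M : ℕ → ℕ} {w : ℕ → ℝ}
    (hw : ∀ N, 0 < w N) (hNw : Tendsto (fun N : ℕ => (N : ℝ) * w N) atTop (𝓝 0))
    (hN2logN : Tendsto (fun N : ℕ => (N : ℝ) ^ 2 * Real.log N / (w N ^ (2 * d) * M N))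
      atTop (𝓝 0)) :
    Tendsto (fun N : ℕ => (N : ℝ) ^ 3 / (M N * w N ^ d)) atTop (𝓝 0) := by
  have hw1 : ∀ᶠ N : ℕ in atTop, w N ≤ 1 := by
    filter_upwards [hNw.eventually_lt_const one_pos, eventually_ge_atTop 1] with N hN hN1
    exact (le_mul_of_one_le_left (hw N).le (by exact_mod_cast hN1)).trans hN.le
  have hlog : ∀ᶠ N : ℕ in atTop, 1 ≤ Real.log N :=
    (Real.tendsto_log_atTop.comp tendsto_natCast_atTop_atTop).eventually_ge_atTop 1
  refine squeeze_zero' (.of_forall fun N => by positivity [(hw N).le])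
    ?_ (by simpa using hN2logN.mul hNw)
  filter_upwards [hw1, hlog] with N hw1 hlog
  have hwN := hw N
  rcases (M N).eq_zero_or_pos with hM | hM
  · simp [hM]
  have hwd : w N ^ d ≤ Real.log N * w N :=
    (pow_le_of_le_one hwN.le hw1 hd.ne').trans (le_mul_of_one_le_left hwN.le hlog)
  calc (N : ℝ) ^ 3 / (M N * w N ^ d) = N ^ 3 * w N ^ d / (w N ^ (2 * d) * M N) := by
        rw [two_mul, pow_add]; field_simp
    _ ≤ N ^ 3 * (Real.log N * w N) / (w N ^ (2 * d) * M N) := by gcongr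
    _ = N ^ 2 * Real.log N / (w N ^ (2 * d) * M N) * (N * w N) := by ring

variable {E : Type*} [NormedAddCommGroup E] [NormedSpace ℝ E] [MeasurableSpace E] [BorelSpace E]
  [FiniteDimensional ℝ E] in
theorem integral_eq_pow_finrank_mul_integral_sub_smul (ν : Measure E) [ν.IsAddHaarMeasure]
    (φ : E → ℝ) (x : E) {w : ℝ} (hw : 0 < w) :
    ∫ y, φ y ∂ν = w ^ Module.finrank ℝ E * ∫ u, φ (x - w • u) ∂ν := by
  rw [Measure.integral_comp_smul ν (fun z => φ (x - z)), integral_sub_left_eq_self φ ν x,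
    smul_eq_mul, abs_of_pos (by positivity), ← mul_assoc, mul_inv_cancel₀ (by positivity),
    one_mul]

section Density

variable {Ω E : Type*} [MeasurableSpace Ω] {μ : Measure Ω} [MeasurableSpace E] {ν : Measure E}
  {p : E → ℝ} {Y : Ω → E}

theorem integral_comp_eq_integral_density_mul (hY : Measurable Y)
    (hlaw : μ.map Y = ν.withDensity fun x => ENNReal.ofReal (p x)) (hp0 : ∀ x, 0 ≤ p x)
    (hp : Measurable p) {g : E → ℝ} (hg : Measurable g) :
    ∫ ω, g (Y ω) ∂μ = ∫ x, p x * g x ∂ν := by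
  rw [← integral_map hY.aemeasurable hg.aestronglyMeasurable, hlaw,
    integral_withDensity_eq_integral_toReal_smul hp.ennreal_ofReal
      (.of_forall fun _ => ENNReal.ofReal_lt_top)]
  simp_rw [ENNReal.toReal_ofReal (hp0 _), smul_eq_mul]

theorem memLp_two_comp_of_integrable_density_mul_sq (hY : Measurable Y)
    (hlaw : μ.map Y = ν.withDensity fun x => ENNReal.ofReal (p x)) (hp0 : ∀ x, 0 ≤ p x)
    (hp : Measurable p) {g : E → ℝ} (hg : Measurable g)
    (hint : Integrable (fun x => p x * g x ^ 2) ν) : MemLp (fun ω => g (Y ω)) 2 μ := by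
  refine (memLp_map_measure_iff hg.aestronglyMeasurable hY.aemeasurable).1 ?_
  rw [hlaw, memLp_two_iff_integrable_sq hg.aestronglyMeasurable,
    integrable_withDensity_iff_integrable_smul' hp.ennreal_ofReal
      (.of_forall fun _ => ENNReal.ofReal_lt_top)]
  simpa only [ENNReal.toReal_ofReal (hp0 _), smul_eq_mul] using hint

theorem measure_preimage_eq_ofReal_setIntegral_density (hY : Measurable Y)
    (hlaw : μ.map Y = ν.withDensity fun x => ENNReal.ofReal (p x)) (hp0 : ∀ x, 0 ≤ p x)
    (hpint : Integrable p ν) {A : Set E} (hA : MeasurableSet A) :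
    μ (Y ⁻¹' A) = ENNReal.ofReal (∫ x in A, p x ∂ν) := by
  rw [← Measure.map_apply hY hA, hlaw, withDensity_apply _ hA,
    ofReal_integral_eq_lintegral_ofReal hpint.restrict (.of_forall hp0)]

end Density

section Probability

variable {Ω : Type*} [MeasurableSpace Ω] {μ : Measure Ω}

theorem meas_ge_abs_average_sub_le [IsProbabilityMeasure μ] {ι : Type*} [Fintype ι]
    {Z : ι → Ω → ℝ} (hZ : ∀ i, MemLp (Z i) 2 μ)
    (hindep : Pairwise fun i j => IndepFun (Z i) (Z j) μ) {m s c : ℝ}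
    (hmean : ∀ i, ∫ ω, Z i ω ∂μ = m) (hsq : ∀ i, ∫ ω, Z i ω ^ 2 ∂μ ≤ s)
    (hι : 0 < Fintype.card ι) (hc : 0 < c) :
    μ {ω | c ≤ |(Fintype.card ι : ℝ)⁻¹ * ∑ i, Z i ω - m|}
      ≤ ENNReal.ofReal (s / (Fintype.card ι * c ^ 2)) := by
  set n : ℝ := (Fintype.card ι : ℝ)
  have hn : 0 < n := Nat.cast_pos.2 hι
  set A : Ω → ℝ := fun ω => n⁻¹ * (∑ i, Z i) ω
  have hA : MemLp A 2 μ := (memLp_finsetSum' _ fun i _ => hZ i).const_mul n⁻¹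
  have hmeanA : μ[A] = m := by
    simp only [A, Finset.sum_apply, integral_const_mul,
      integral_finsetSum _ fun i _ => (hZ i).integrable one_le_two, hmean, Finset.sum_const,
      Finset.card_univ, nsmul_eq_mul]
    exact inv_mul_cancel_left₀ hn.ne' m
  have hvarA : variance A μ ≤ s / n := by
    have hsum : variance (∑ i, Z i) μ ≤ n * s := by
      rw [IndepFun.variance_sum (fun i _ => hZ i) fun i _ j _ hij => hindep hij]
      calc ∑ i, variance (Z i) μ ≤ ∑ _i : ι, s :=
            Finset.sum_le_sum fun i _ => (variance_le_expectation_sq (hZ i).1).trans (hsq i)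
        _ = n * s := by simp [n]
    calc variance A μ = n⁻¹ ^ 2 * variance (∑ i, Z i) μ := variance_const_mul _ _ _
      _ ≤ n⁻¹ ^ 2 * (n * s) := by gcongr
      _ = s / n := by field_simp
  have hcheb := meas_ge_le_variance_div_sq hA hc
  rw [hmeanA] at hcheb
  refine le_of_eq_of_le ?_ (hcheb.trans (ENNReal.ofReal_le_ofReal ?_))
  · simp [A]
  · calc variance A μ / c ^ 2 ≤ s / n / c ^ 2 := by gcongr
      _ = s / (n * c ^ 2) := div_div _ _ _

theorem measure_prodMk_mem_le_of_indepFun [IsProbabilityMeasure μ] {α β : Type*}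
    [MeasurableSpace α] [MeasurableSpace β] {X : Ω → α} {V : Ω → β} (hX : Measurable X)
    (hV : Measurable V) (hXV : IndepFun X V μ) {C : Set (α × β)} (hC : MeasurableSet C)
    {B : ENNReal} (hB : ∀ x, μ {ω | (x, V ω) ∈ C} ≤ B) :
    μ {ω | (X ω, V ω) ∈ C} ≤ B := by
  have hlaw : μ.map (fun ω => (X ω, V ω)) = (μ.map X).prod (μ.map V) :=
    (indepFun_iff_map_prod_eq_prod_map_map hX.aemeasurable hV.aemeasurable).1 hXV
  have hslice : ∀ x, μ.map V (Prod.mk x ⁻¹' C) ≤ B := fun x => by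
    rw [Measure.map_apply hV (measurable_prodMk_left hC)]
    exact hB x
  have := Measure.isProbabilityMeasure_map (μ := μ) hX.aemeasurable
  calc μ {ω | (X ω, V ω) ∈ C} = (μ.map X).prod (μ.map V) C := by
        rw [← hlaw, Measure.map_apply (hX.prodMk hV) hC]; rfl
    _ = ∫⁻ x, μ.map V (Prod.mk x ⁻¹' C) ∂μ.map X := Measure.prod_apply hC
    _ ≤ ∫⁻ _, B ∂μ.map X := lintegral_mono hslice
    _ = B := by simp

theorem ProbabilityTheory.iIndepFun.indepFun_sumElim_inl_pi {ι κ β : Type*} [Fintype κ]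
    [MeasurableSpace β]
    {X : ι → Ω → β} {Y : κ → Ω → β} (h : iIndepFun (Sum.elim X Y) μ)
    (hX : ∀ i, Measurable (X i)) (hY : ∀ j, Measurable (Y j)) (i : ι) :
    IndepFun (X i) (fun ω j => Y j ω) μ := by
  classical
  let S : Finset (ι ⊕ κ) := {.inl i}
  let T : Finset (ι ⊕ κ) := Finset.univ.map .inr
  have hST : Disjoint S T := by simp [S, T]
  exact (h.indepFun_finset S T hST (Sum.forall.2 ⟨hX, hY⟩)).comp
    (φ := fun g : S → β => g ⟨.inl i, by simp [S]⟩)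
    (ψ := fun g : T → β => fun j => g ⟨.inr j, by simp [T]⟩)
    (measurable_pi_apply _) (measurable_pi_lambda _ fun _ => measurable_pi_apply _)

theorem measure_iUnion_le_ofReal_card_mul {ι : Type*} [Fintype ι] {s : ι → Set Ω} {b : ℝ}
    (h : ∀ i, μ (s i) ≤ ENNReal.ofReal b) :
    μ (⋃ i, s i) ≤ ENNReal.ofReal (Fintype.card ι * b) := by
  refine (measure_iUnion_fintype_le μ s).trans ((Finset.sum_le_sum fun i _ => h i).trans ?_)
  rw [Finset.sum_const, Finset.card_univ, nsmul_eq_mul, ENNReal.ofReal_mul (by positivity),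
    ENNReal.ofReal_natCast]

end Probability

theorem tendsto_natCast_mul_setIntegral_lt_inv {α : Type*} [MeasurableSpace α] {ν : Measure α}
    {p : α → ℝ} (hp0 : ∀ x, 0 ≤ p x) (hp : Measurable p) {S : Set α} (hS : MeasurableSet S)
    (hνS : ν S ≠ ⊤) (hsupp : ∀ x, x ∉ S → p x = 0) :
    Tendsto (fun N : ℕ => (N : ℝ) * ∫ x in {y | p y < (N : ℝ)⁻¹}, p x ∂ν) atTop (𝓝 0) := by
  set A : ℕ → Set α := fun N => {y | p y < (N : ℝ)⁻¹}
  set F : ℕ → α → ℝ := fun N => (A N).indicator fun y => N * p y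
  have hA : ∀ N, MeasurableSet (A N) := fun N => measurableSet_lt hp measurable_const
  have hF : ∀ N : ℕ, ∫ x, F N x ∂ν = N * ∫ x in A N, p x ∂ν := fun N => by
    rw [integral_indicator (hA N), integral_const_mul]
  have hF0 : ∀ N x, p x = 0 → F N x = 0 := fun N x hx =>
    Set.indicator_apply_eq_zero.2 fun _ => by rw [hx, mul_zero]
  -- Dominated convergence: `F N ≤ 1` on `S`, `F N = 0` off `S`, and `F N x = 0` once `1/N ≤ p x`.
  have hbound : ∀ N, ∀ᵐ x ∂ν, ‖F N x‖ ≤ S.indicator 1 x := fun N => .of_forall fun x => by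
    by_cases hx : x ∈ S
    · rw [Set.indicator_of_mem hx, Pi.one_apply]
      by_cases hlt : x ∈ A N
      · rw [show F N x = N * p x from Set.indicator_of_mem hlt _, Real.norm_eq_abs,
          abs_of_nonneg (by positivity [hp0 x])]
        calc (N : ℝ) * p x ≤ N * (N : ℝ)⁻¹ := by gcongr; exact le_of_lt hlt
          _ ≤ 1 := mul_inv_le_one
      · rw [show F N x = 0 from Set.indicator_of_notMem hlt _, norm_zero]
        exact zero_le_one
    · rw [Set.indicator_of_notMem hx, hF0 N x (hsupp x hx), norm_zero]
  have hlim : ∀ᵐ x ∂ν, Tendsto (fun N => F N x) atTop (𝓝 0) := .of_forall fun x => by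
    refine tendsto_const_nhds.congr' ?_
    rcases (hp0 x).eq_or_lt with hx | hx
    · exact .of_forall fun N => (hF0 N x hx.symm).symm
    · filter_upwards [(tendsto_inv_atTop_zero.comp tendsto_natCast_atTop_atTop).eventually_lt_const
        hx] with N hN
      exact (Set.indicator_of_notMem (show x ∉ A N from hN.le.not_gt) _).symm
  have hdom := tendsto_integral_of_dominated_convergence (S.indicator 1)
    (fun N => ((measurable_const.mul hp).indicator (hA N)).aestronglyMeasurable)
    ((integrable_indicator_iff hS).2 (integrableOn_const hνS)) hbound hlim
  rw [integral_zero] at hdom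
  exact (tendsto_congr hF).1 hdom

section Kernel

variable {d : ℕ} {p κ : (Fin d → ℝ) → ℝ} {w pmax : ℝ}

/-- The expectation of `parzen w κ X' x` when the samples `X' m` have density `p`. -/
noncomputable def parzenMean (p κ : (Fin d → ℝ) → ℝ) (w : ℝ) (x : Fin d → ℝ) : ℝ :=
  ∫ u, κ u * p (x - w • u)

theorem integrable_kernel_mul_comp (hκ : Integrable κ) (hp0 : ∀ x, 0 ≤ p x)
    (hp : Measurable p) (hple : ∀ x, p x ≤ pmax) (x : Fin d → ℝ) :
    Integrable fun u => κ u * p (x - w • u) :=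
  hκ.mul_bdd (hp.comp (by fun_prop)).aestronglyMeasurable
    (.of_forall fun u => (abs_of_nonneg (hp0 _)).trans_le (hple _))

theorem parzenMean_le (hκ0 : ∀ u, 0 ≤ κ u) (hκ1 : ∫ u, κ u = 1) (hp0 : ∀ x, 0 ≤ p x)
    (hp : Measurable p) (hple : ∀ x, p x ≤ pmax) (x : Fin d → ℝ) :
    parzenMean p κ w x ≤ pmax := by
  have hκ : Integrable κ := .of_integral_ne_zero (by simp [hκ1])
  calc parzenMean p κ w x ≤ ∫ u, κ u * pmax :=
        integral_mono (integrable_kernel_mul_comp hκ hp0 hp hple x) (hκ.mul_const pmax)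
          fun u => mul_le_mul_of_nonneg_left (hple _) (hκ0 u)
    _ = pmax := by rw [integral_mul_const, hκ1, one_mul]

theorem measurable_parzenMean (hκ : Measurable κ) (hp : Measurable p) :
    Measurable (parzenMean p κ w) :=
  have h : Measurable fun z : (Fin d → ℝ) × (Fin d → ℝ) => κ z.2 * p (z.1 - w • z.2) :=
    (hκ.comp measurable_snd).mul (hp.comp (by fun_prop))
  h.stronglyMeasurable.integral_prod_right'.measurable

theorem abs_parzenMean_sub_le {L : ℝ} (hκ0 : ∀ u, 0 ≤ κ u) (hκ1 : ∫ u, κ u = 1)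
    (hp0 : ∀ x, 0 ≤ p x) (hp : Measurable p) (hple : ∀ x, p x ≤ pmax)
    (hLip : ∀ x y, |p x - p y| ≤ L * ∑ k, |x k - y k|)
    (hmoment : Integrable fun u => (∑ k, |u k|) * κ u) (hw : 0 < w) (x : Fin d → ℝ) :
    |parzenMean p κ w x - p x| ≤ (L * ∫ u, (∑ k, |u k|) * κ u) * w := by
  have hκ : Integrable κ := .of_integral_ne_zero (by simp [hκ1])
  have hdiff : parzenMean p κ w x - p x = ∫ u, κ u * (p (x - w • u) - p x) := by
    simp_rw [mul_sub]
    rw [integral_sub (integrable_kernel_mul_comp hκ hp0 hp hple x) (hκ.mul_const _),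
      integral_mul_const, hκ1, one_mul, parzenMean]
  have hpt : ∀ u, ‖κ u * (p (x - w • u) - p x)‖ ≤ L * w * ((∑ k, |u k|) * κ u) := fun u => by
    have hshift : ∑ k, |(x - w • u) k - x k| = w * ∑ k, |u k| := by
      simp [Finset.mul_sum, abs_mul, abs_of_pos hw]
    rw [Real.norm_eq_abs, abs_mul, abs_of_nonneg (hκ0 u)]
    calc κ u * |p (x - w • u) - p x| ≤ κ u * (L * (w * ∑ k, |u k|)) :=
          mul_le_mul_of_nonneg_left (hshift ▸ hLip _ _) (hκ0 u)
      _ = L * w * ((∑ k, |u k|) * κ u) := by ring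
  rw [hdiff, ← Real.norm_eq_abs]
  refine (norm_integral_le_of_norm_le (hmoment.const_mul _) (.of_forall hpt)).trans_eq ?_
  rw [integral_const_mul]
  ring

theorem integral_density_mul_scaled_kernel (hw : 0 < w) (x : Fin d → ℝ) :
    ∫ y, p y * ((w ^ d)⁻¹ * κ (w⁻¹ • (x - y))) = parzenMean p κ w x := by
  rw [integral_eq_pow_finrank_mul_integral_sub_smul volume _ x hw, Module.finrank_fin_fun,
    ← integral_const_mul]
  refine integral_congr_ae (.of_forall fun u => ?_)
  simp only [sub_sub_cancel, inv_smul_smul₀ hw.ne']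
  field_simp

end Kernel

section Sampling

variable {d : ℕ} {p κ : (Fin d → ℝ) → ℝ} {Ω : Type} [MeasurableSpace Ω] {μ : Measure Ω}
  [IsProbabilityMeasure μ] {N M : ℕ} {X : Fin N → Ω → (Fin d → ℝ)}
  {X' : Fin M → Ω → (Fin d → ℝ)}

theorem meas_ge_abs_parzen_sub_parzenMean_le {pmax Kmax : ℝ}
    (hκ0 : ∀ u, 0 ≤ κ u) (hκ : Measurable κ) (hκ1 : ∫ u, κ u = 1) (hκle : ∀ u, κ u ≤ Kmax)
    (hp0 : ∀ x, 0 ≤ p x) (hp : Measurable p) (hple : ∀ x, p x ≤ pmax)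
    (hM : 0 < M) (hX' : ∀ m, Measurable (X' m))
    (hlaw : ∀ m, μ.map (X' m) = volume.withDensity fun x => ENNReal.ofReal (p x))
    (hindep : Pairwise fun m m' => IndepFun (X' m) (X' m') μ) {w : ℝ} (hw : 0 < w)
    (x : Fin d → ℝ) {t : ℝ} (ht : 0 < t) :
    μ {ω | t ≤ |parzen w κ X' x ω - parzenMean p κ w x|}
      ≤ ENNReal.ofReal (Kmax * pmax / (M * w ^ d * t ^ 2)) := by
  set B : ℝ := (w ^ d)⁻¹ * Kmax
  set g : (Fin d → ℝ) → ℝ := fun y => (w ^ d)⁻¹ * κ (w⁻¹ • (x - y))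
  have hg : Measurable g := (hκ.comp (by fun_prop)).const_mul _
  have hg0 : ∀ y, 0 ≤ g y := fun y => mul_nonneg (by positivity) (hκ0 _)
  have hgB : ∀ y, g y ≤ B := fun y => mul_le_mul_of_nonneg_left (hκle _) (by positivity)
  have hmem : ∀ m, MemLp (fun ω => g (X' m ω)) 2 μ := fun m =>
    .of_bound (hg.comp (hX' m)).aestronglyMeasurable B
      (.of_forall fun ω => (abs_of_nonneg (hg0 _)).trans_le (hgB _))
  have hmean : ∀ m, ∫ ω, g (X' m ω) ∂μ = parzenMean p κ w x := fun m => by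
    rw [integral_comp_eq_integral_density_mul (hX' m) (hlaw m) hp0 hp hg,
      integral_density_mul_scaled_kernel hw]
  -- `0 ≤ g ≤ B` gives `g ^ 2 ≤ B * g`, so the second moment is at most `B` times the mean.
  have hsq : ∀ m, ∫ ω, g (X' m ω) ^ 2 ∂μ ≤ B * pmax := fun m => by
    calc ∫ ω, g (X' m ω) ^ 2 ∂μ ≤ ∫ ω, B * g (X' m ω) ∂μ :=
          integral_mono (hmem m).integrable_sq (((hmem m).integrable one_le_two).const_mul B)
            fun ω => by rw [sq]; exact mul_le_mul_of_nonneg_right (hgB _) (hg0 _)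
      _ ≤ B * pmax := by
          rw [integral_const_mul, hmean]
          exact mul_le_mul_of_nonneg_left (parzenMean_le hκ0 hκ1 hp0 hp hple x)
            ((hg0 x).trans (hgB x))
  have hparzen : ∀ ω, parzen w κ X' x ω = (Fintype.card (Fin M) : ℝ)⁻¹ * ∑ m, g (X' m ω) :=
    fun ω => by rw [parzen, Fintype.card_fin, ← Finset.mul_sum, one_div, mul_inv, mul_assoc]
  simp_rw [hparzen]
  refine (meas_ge_abs_average_sub_le hmem (fun m m' h => (hindep h).comp hg hg) hmean hsq
    (by simp [hM]) ht).trans (ENNReal.ofReal_le_ofReal (le_of_eq ?_))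
  simp only [B, Fintype.card_fin]
  field_simp

theorem meas_iUnion_ge_abs_parzen_sub_parzenMean_le {pmax Kmax : ℝ}
    (hκ0 : ∀ u, 0 ≤ κ u) (hκ : Measurable κ) (hκ1 : ∫ u, κ u = 1) (hκle : ∀ u, κ u ≤ Kmax)
    (hp0 : ∀ x, 0 ≤ p x) (hp : Measurable p) (hple : ∀ x, p x ≤ pmax) (hM : 0 < M)
    (hX : ∀ n, Measurable (X n)) (hX' : ∀ m, Measurable (X' m))
    (hindep : iIndepFun (Sum.elim X X') μ)
    (hX'law : ∀ m, μ.map (X' m) = volume.withDensity fun x => ENNReal.ofReal (p x))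
    {w : ℝ} (hw : 0 < w) {t : ℝ} (ht : 0 < t) :
    μ (⋃ n, {ω | t ≤ |parzen w κ X' (X n ω) ω - parzenMean p κ w (X n ω)|})
      ≤ ENNReal.ofReal (N * (Kmax * pmax / (M * w ^ d * t ^ 2))) := by
  -- Freeze `X n = x` and average over `x`, using that `X n` is independent of all of `X'`.
  set C : Set ((Fin d → ℝ) × (Fin M → Fin d → ℝ)) :=
    {z | t ≤ |parzen w κ (fun m v => v m) z.1 z.2 - parzenMean p κ w z.1|}
  have hC : MeasurableSet C := by
    refine measurableSet_le measurable_const (Measurable.abs (.sub ?_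
      ((measurable_parzenMean hκ hp).comp measurable_fst)))
    unfold parzen
    fun_prop
  have hX'pair : Pairwise fun m m' => IndepFun (X' m) (X' m') μ :=
    fun m m' h => hindep.indepFun (Sum.inr_injective.ne h)
  have h := measure_iUnion_le_ofReal_card_mul fun n =>
    measure_prodMk_mem_le_of_indepFun (hX n) (measurable_pi_lambda _ hX')
      (hindep.indepFun_sumElim_inl_pi hX hX' n) hC fun x =>
      meas_ge_abs_parzen_sub_parzenMean_le hκ0 hκ hκ1 hκle hp0 hp hple hM hX' hX'law hX'pair
        hw x ht
  rw [Fintype.card_fin] at h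
  exact h

theorem meas_ge_abs_average_log_density_sub_le (hp0 : ∀ x, 0 ≤ p x) (hp : Measurable p)
    (hlog2 : Integrable fun x => p x * Real.log (p x) ^ 2) (hN : 0 < N)
    (hX : ∀ n, Measurable (X n))
    (hlaw : ∀ n, μ.map (X n) = volume.withDensity fun x => ENNReal.ofReal (p x))
    (hindep : Pairwise fun n n' => IndepFun (X n) (X n') μ) {η : ℝ} (hη : 0 < η) :
    μ {ω | η ≤ |(N : ℝ)⁻¹ * ∑ n, Real.log (p (X n ω)) - ∫ x, p x * Real.log (p x)|}
      ≤ ENNReal.ofReal ((∫ x, p x * Real.log (p x) ^ 2) / (N * η ^ 2)) := by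
  have hg : Measurable fun x => Real.log (p x) := Real.measurable_log.comp hp
  simpa only [Fintype.card_fin] using meas_ge_abs_average_sub_le
    (fun n => memLp_two_comp_of_integrable_density_mul_sq (hX n) (hlaw n) hp0 hp hg hlog2)
    (fun n n' h => (hindep h).comp hg hg)
    (fun n => integral_comp_eq_integral_density_mul (hX n) (hlaw n) hp0 hp hg)
    (fun n => (integral_comp_eq_integral_density_mul (hX n) (hlaw n) hp0 hp (hg.pow_const 2)).le)
    (by simpa using hN) hη

theorem toReal_measure_lt_abs_entropyEstimate_sub_le {pmax Kmax : ℝ} (hκ0 : ∀ u, 0 ≤ κ u)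
    (hκ : Measurable κ) (hκ1 : ∫ u, κ u = 1) (hκle : ∀ u, κ u ≤ Kmax) (hp0 : ∀ x, 0 ≤ p x)
    (hp : Measurable p) (hpint : Integrable p) (hple : ∀ x, p x ≤ pmax)
    (hlog2 : Integrable fun x => p x * Real.log (p x) ^ 2) (hN : 0 < N) (hM : 0 < M)
    (hX : ∀ n, Measurable (X n)) (hX' : ∀ m, Measurable (X' m))
    (hindep : iIndepFun (Sum.elim X X') μ)
    (hXlaw : ∀ n, μ.map (X n) = volume.withDensity fun x => ENNReal.ofReal (p x))
    (hX'law : ∀ m, μ.map (X' m) = volume.withDensity fun x => ENNReal.ofReal (p x))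
    {w γ η ε : ℝ} (hw : 0 < w) (hγ : 0 < γ) (hγ4 : γ ≤ 1 / 4) (hη : 0 < η)
    (hε : 4 * γ + η ≤ ε) (hbias : ∀ x, |parzenMean p κ w x - p x| ≤ γ / N) :
    (μ {ω | ε < |entropyEstimate w κ X X' ω - (-∫ x, p x * Real.log (p x))|}).toReal
      ≤ N * (∫ x in {y | p y < (N : ℝ)⁻¹}, p x) + Kmax * pmax / γ ^ 2 * (N ^ 3 / (M * w ^ d))
        + (∫ x, p x * Real.log (p x) ^ 2) / η ^ 2 / N := by
  set I := ∫ x, p x * Real.log (p x)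
  set E₁ := ⋃ n, X n ⁻¹' {y | p y < (N : ℝ)⁻¹}
  set E₂ := ⋃ n, {ω | γ / N ≤ |parzen w κ X' (X n ω) ω - parzenMean p κ w (X n ω)|}
  set E₃ := {ω | η ≤ |(N : ℝ)⁻¹ * ∑ n, Real.log (p (X n ω)) - I|}
  have hsub : {ω | ε < |entropyEstimate w κ X X' ω - -I|} ⊆ E₁ ∪ E₂ ∪ E₃ :=
    setOf_lt_abs_entropyEstimate_sub_subset hN hγ.le hγ4 hε hbias
  have hA : MeasurableSet {y | p y < (N : ℝ)⁻¹} := measurableSet_lt hp measurable_const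
  have h₁ : μ E₁ ≤ ENNReal.ofReal (N * ∫ x in {y | p y < (N : ℝ)⁻¹}, p x) := by
    have h := measure_iUnion_le_ofReal_card_mul fun n =>
      (measure_preimage_eq_ofReal_setIntegral_density (hX n) (hXlaw n) hp0 hpint hA).le
    rwa [Fintype.card_fin] at h
  have h₂ : μ E₂ ≤ ENNReal.ofReal (Kmax * pmax / γ ^ 2 * (N ^ 3 / (M * w ^ d))) := by
    refine (meas_iUnion_ge_abs_parzen_sub_parzenMean_le hκ0 hκ hκ1 hκle hp0 hp hple hM hX hX'
      hindep hX'law hw (by positivity)).trans_eq ?_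
    congr 1
    field_simp
  have h₃ : μ E₃ ≤ ENNReal.ofReal ((∫ x, p x * Real.log (p x) ^ 2) / η ^ 2 / N) := by
    rw [div_right_comm, div_div]
    exact meas_ge_abs_average_log_density_sub_le hp0 hp hlog2 hN hX hXlaw
      (fun n n' h => hindep.indepFun (Sum.inl_injective.ne h)) hη
  have hKmax : 0 ≤ Kmax := (hκ0 0).trans (hκle 0)
  have hpmax : 0 ≤ pmax := (hp0 0).trans (hple 0)
  have hnonneg₁ : 0 ≤ (N : ℝ) * ∫ x in {y | p y < (N : ℝ)⁻¹}, p x :=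
    mul_nonneg N.cast_nonneg (setIntegral_nonneg hA fun x _ => hp0 x)
  have hnonneg₂ : 0 ≤ Kmax * pmax / γ ^ 2 * (N ^ 3 / (M * w ^ d)) := by positivity
  have hnonneg₃ : 0 ≤ (∫ x, p x * Real.log (p x) ^ 2) / η ^ 2 / N := by
    have : 0 ≤ ∫ x, p x * Real.log (p x) ^ 2 := integral_nonneg fun x => by positivity [hp0 x]
    positivity
  refine ENNReal.toReal_le_of_le_ofReal (by positivity) ?_
  rw [ENNReal.ofReal_add (add_nonneg hnonneg₁ hnonneg₂) hnonneg₃,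
    ENNReal.ofReal_add hnonneg₁ hnonneg₂]
  exact (measure_mono hsub).trans ((measure_union_le _ _).trans
    (add_le_add ((measure_union_le _ _).trans (add_le_add h₁ h₂)) h₃))

end Sampling

theorem knife_consistency_general {d : ℕ} (hd : 0 < d) (L : ℝ)
    (p κ : (Fin d → ℝ) → ℝ)
    (hp0 : ∀ x, 0 ≤ p x) (hpmeas : Measurable p)
    (hpsupp : ∀ x, x ∉ Set.Icc (0 : Fin d → ℝ) 1 → p x = 0)
    (hpint : ∫ x, p x = 1)
    (hLip : ∀ x y, |p x - p y| ≤ L * ∑ k, |x k - y k|)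
    (hκ0 : ∀ x, 0 ≤ κ x) (hκmeas : Measurable κ)
    (hκsupp : ∀ x, x ∉ Set.Icc (0 : Fin d → ℝ) 1 → κ x = 0)
    (hκint : ∫ x, κ x = 1)
    (pmax : ℝ) (hpmax : IsGreatest (p '' Set.Icc (0 : Fin d → ℝ) 1) pmax)
    (hC₁int : Integrable fun x => p x * Real.log (p x) ^ 2)
    (hC₂int : Integrable fun u => (∑ k, |u k|) * κ u)
    (Kmax : ℝ) (hKmax : IsGreatest (κ '' Set.Icc (0 : Fin d → ℝ) 1) Kmax)
    (Ω : Type) [MeasurableSpace Ω] (μ : Measure Ω) [IsProbabilityMeasure μ]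
    (M : ℕ → ℕ) (w : ℕ → ℝ) (hw : ∀ N, 0 < w N)
    (hM : Tendsto M atTop atTop)
    (hNw : Tendsto (fun N : ℕ => (N : ℝ) * w N) atTop (nhds 0))
    (hN2logN : Tendsto (fun N : ℕ => (N : ℝ) ^ 2 * Real.log N / (w N ^ (2 * d) * M N))
      atTop (nhds 0))
    (X : (N : ℕ) → Fin N → Ω → (Fin d → ℝ))
    (X' : (N : ℕ) → Fin (M N) → Ω → (Fin d → ℝ))
    (hXmeas : ∀ N n, Measurable (X N n)) (hX'meas : ∀ N m, Measurable (X' N m))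
    (hindep : ∀ N, iIndepFun (Sum.elim (X N) (X' N)) μ)
    (hXlaw : ∀ N n, Measure.map (X N n) μ = volume.withDensity fun x => ENNReal.ofReal (p x))
    (hX'law : ∀ N m,
      Measure.map (X' N m) μ = volume.withDensity fun x => ENNReal.ofReal (p x)) :
    ∀ δ > 0, ∀ ε > 0, ∃ N₀ : ℕ, ∀ N ≥ N₀,
      (μ {ω | ε <
        |entropyEstimate (w N) κ (X N) (X' N) ω - (-∫ x, p x * Real.log (p x))|}).toReal
        ≤ δ := by
  intro δ hδ ε hε
  have hple := le_of_isGreatest_image_of_eq_zero hp0 hpsupp hpmax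
  have hκle := le_of_isGreatest_image_of_eq_zero hκ0 hκsupp hKmax
  set γ : ℝ := min (1 / 4) (ε / 8)
  have hγ : 0 < γ := lt_min (by norm_num) (by positivity)
  set C₂ := L * ∫ u, (∑ k, |u k|) * κ u
  have hbound : Tendsto (fun N : ℕ => N * (∫ x in {y | p y < (N : ℝ)⁻¹}, p x)
      + Kmax * pmax / γ ^ 2 * (N ^ 3 / (M N * w N ^ d))
      + (∫ x, p x * Real.log (p x) ^ 2) / (ε / 2) ^ 2 / N) atTop (𝓝 0) := by
    simpa using ((tendsto_natCast_mul_setIntegral_lt_inv hp0 hpmeas measurableSet_Icc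
      isCompact_Icc.measure_lt_top.ne hpsupp).add
      ((tendsto_cube_div_mul_pow hd hw hNw hN2logN).const_mul _)).add
      (tendsto_const_div_atTop_nhds_zero_nat _)
  have hbias : Tendsto (fun N : ℕ => C₂ * (N * w N)) atTop (𝓝 0) := by
    simpa using hNw.const_mul C₂
  obtain ⟨N₀, hN₀⟩ := eventually_atTop.1 ((hbound.eventually (ge_mem_nhds hδ)).and
    ((hbias.eventually (ge_mem_nhds hγ)).and
      ((eventually_ge_atTop 1).and (hM.eventually_ge_atTop 1))))
  refine ⟨N₀, fun N hN => ?_⟩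
  obtain ⟨hsmall, hbiasN, hN1, hM1⟩ := hN₀ N hN
  refine le_trans (toReal_measure_lt_abs_entropyEstimate_sub_le hκ0 hκmeas hκint hκle hp0 hpmeas
    (.of_integral_ne_zero (by simp [hpint])) hple hC₁int hN1 hM1 (hXmeas N) (hX'meas N)
    (hindep N) (hXlaw N) (hX'law N) (hw N) hγ (min_le_left _ _) (half_pos hε) ?_
    fun x => ?_) hsmall
  · linarith [min_le_right (1 / 4) (ε / 8)]
  · refine (abs_parzenMean_sub_le hκ0 hκint hp0 hpmeas hple hLip hC₂int (hw N) x).trans ?_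
    rw [le_div_iff₀ (by positivity)]
    linarith

/-- **Theorem (consistency of the plug-in entropy estimator).** Let `p ∈ 𝒫_L` be an
`L`-Lipschitz density supported on `𝒳 = [0,1]ᵈ` with `p_max`, `C₁`, `C₂`, `K_max` finite.
For each `N`, let `X₁, …, X_N` and `X'₁, …, X'_{M(N)}` be independent i.i.d. samples from
`p`, and let `Ĥ(𝒟; w)` be the plug-in estimate built from the Parzen–Rosenblatt estimator
with bandwidth `w(N) > 0`. If `w(N) → 0`, `M(N) → ∞`, `N·w(N) → 0` and
`N² log N/(w(N)^{2d} M(N)) → 0`, then `|Ĥ(𝒟; w(N)) - h(X)| → 0` in probability: for all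
`δ, ε > 0` there is `N₀` such that for all `N ≥ N₀`,
`Pr(|Ĥ(𝒟; w(N)) - h(X)| > ε) ≤ δ`. -/
theorem knife_consistency {d : ℕ} (hd : 0 < d) (L : ℝ) (hL : 0 < L)
    (p κ : (Fin d → ℝ) → ℝ)
    (hp0 : ∀ x, 0 ≤ p x) (hpmeas : Measurable p)
    (hpsupp : ∀ x, x ∉ Set.Icc (0 : Fin d → ℝ) 1 → p x = 0)
    (hpint : ∫ x, p x = 1)
    (hLip : ∀ x y, |p x - p y| ≤ L * ∑ k, |x k - y k|)
    (hκ0 : ∀ x, 0 ≤ κ x) (hκmeas : Measurable κ)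
    (hκsupp : ∀ x, x ∉ Set.Icc (0 : Fin d → ℝ) 1 → κ x = 0)
    (hκint : ∫ x, κ x = 1)
    (pmax : ℝ) (hpmax : IsGreatest (p '' Set.Icc (0 : Fin d → ℝ) 1) pmax)
    (hC₁int : Integrable fun x => p x * Real.log (p x) ^ 2)
    (hC₂int : Integrable fun u => (∑ k, |u k|) * κ u)
    (Kmax : ℝ) (hKmax : IsGreatest (κ '' Set.Icc (0 : Fin d → ℝ) 1) Kmax)
    (Ω : Type) [MeasurableSpace Ω] (μ : Measure Ω) [IsProbabilityMeasure μ]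
    (M : ℕ → ℕ) (w : ℕ → ℝ) (hw : ∀ N, 0 < w N)
    (hM : Tendsto M atTop atTop)
    (hw0 : Tendsto w atTop (nhds 0))
    (hNw : Tendsto (fun N : ℕ => (N : ℝ) * w N) atTop (nhds 0))
    (hN2logN : Tendsto (fun N : ℕ => (N : ℝ) ^ 2 * Real.log N / (w N ^ (2 * d) * M N))
      atTop (nhds 0))
    (X : (N : ℕ) → Fin N → Ω → (Fin d → ℝ))
    (X' : (N : ℕ) → Fin (M N) → Ω → (Fin d → ℝ))
    (hXmeas : ∀ N n, Measurable (X N n)) (hX'meas : ∀ N m, Measurable (X' N m))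
    (hindep : ∀ N, iIndepFun (Sum.elim (X N) (X' N)) μ)
    (hXlaw : ∀ N n, Measure.map (X N n) μ = volume.withDensity fun x => ENNReal.ofReal (p x))
    (hX'law : ∀ N m,
      Measure.map (X' N m) μ = volume.withDensity fun x => ENNReal.ofReal (p x)) :
    ∀ δ > 0, ∀ ε > 0, ∃ N₀ : ℕ, ∀ N ≥ N₀,
      (μ {ω | ε <
        |entropyEstimate (w N) κ (X N) (X' N) ω - (-∫ x, p x * Real.log (p x))|}).toReal
        ≤ δ :=
  knife_consistency_general hd L p κ hp0 hpmeas hpsupp hpint hLip hκ0 hκmeas hκsupp hκint pmax hpmax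
    hC₁int hC₂int Kmax hKmax Ω μ M w hw hM hNw hN2logN X X' hXmeas hX'meas hindep hXlaw hX'law
end

section
/- Fix d ∈ ℕ, L > 0, δ > 0, and let p ∈ 𝒫_L with C₂ and K_max finite. Let X'₁,…,X'_M be i.i.d. samples from p, let X₁,…,X_N be i.i.d. samples from p independent of (X'₁,…,X'_M), let p̂(x; w) = (1/(M wᵈ)) Σ_{m=1}^M κ((x − X'_m)/w) for bandwidth w > 0, and let Ĥ(𝒟; w) = −(1/N) Σ_{n=1}^N log p̂(X_n; w). If 1 − (3 N K_max/(wᵈ δ)) √(log(6N/δ)/(2M)) − 3 N C₂ w/δ > 0, then with probability greater than 1 − 2δ/3, |Ĥ(𝒟; w) + (1/N) Σ_{n=1}^N log p(X_n)| ≤ −log(1 − (3 N K_max/(wᵈ δ)) √(log(6N/δ)/(2M)) − 3 N C₂ w/δ). -/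
open MeasureTheory ProbabilityTheory

/-! For fixed `x`, the estimator `p̂(x)` is an average of `M` i.i.d. terms bounded by `K_max / wᵈ`,
so its fluctuation is at most `√Var ≤ K_max / (2 wᵈ √M)` (Popoviciu), while its mean
`∫ κ(y) p(x - w y) dy` is within `C₂ w` of `p(x)` by the Lipschitz bound. Since each `Xₙ` is
independent of the `X'ₘ`, conditioning on `Xₙ = x` and applying Markov's inequality at the level
`τ p(x)` bounds the probability that `|p̂(Xₙ) - p(Xₙ)| > τ p(Xₙ)` by the risk divided by `τ`,
after integrating against `p` over `[0,1]ᵈ`; the choice of `τ` makes this at most `δ / (3N)`.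
Off the union of these `N` events, `(1 - τ) p ≤ p̂ ≤ (1 + τ) p` at every sample point, and
`log (1 + τ) ≤ -log (1 - τ)` gives the bound on each log-ratio, hence on their average. -/

open scoped ENNReal

section

variable {Ω : Type*} [MeasurableSpace Ω] {μ : Measure Ω}

lemma measure_lt_le_ofReal_integral_div [IsFiniteMeasure μ] {f : Ω → ℝ} (hf0 : 0 ≤ f)
    (hf : Integrable f μ) {t : ℝ} (ht : 0 < t) :
    μ {ω | t < f ω} ≤ ENNReal.ofReal ((∫ ω, f ω ∂μ) / t) := by
  have hmarkov := mul_meas_ge_le_integral_of_nonneg (ae_of_all μ hf0) hf t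
  calc μ {ω | t < f ω} ≤ μ {ω | t ≤ f ω} := measure_mono fun ω (hω : t < f ω) => hω.le
    _ = ENNReal.ofReal (μ.real {ω | t ≤ f ω}) := (ofReal_measureReal (measure_ne_top _ _)).symm
    _ ≤ ENNReal.ofReal ((∫ ω, f ω ∂μ) / t) :=
      ENNReal.ofReal_le_ofReal ((le_div_iff₀' ht).mpr hmarkov)

lemma le_of_isGreatest_image_of_nonneg_of_eq_zero {α : Type*} {s : Set α} {f : α → ℝ} {K : ℝ}
    (hK : IsGreatest (f '' s) K) (hf0 : ∀ x, 0 ≤ f x) (hf : ∀ x, x ∉ s → f x = 0) (x : α) :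
    f x ≤ K := by
  by_cases hx : x ∈ s
  · exact hK.2 ⟨x, hx, rfl⟩
  · obtain ⟨⟨y, -, rfl⟩, -⟩ := hK
    exact (hf x hx).trans_le (hf0 y)

lemma pos_of_forall_le_of_integral_ne_zero {α : Type*} [MeasurableSpace α] {μ : Measure α}
    {f : α → ℝ} {K : ℝ} (hfK : ∀ x, f x ≤ K) (hf0 : ∀ x, 0 ≤ f x) (hf : ∫ x, f x ∂μ ≠ 0) :
    0 < K := by
  by_contra! hK
  exact hf (by simp [show f = 0 from funext fun x => le_antisymm ((hfK x).trans hK) (hf0 x)])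

lemma abs_log_sub_log_le_neg_log_one_sub {a b τ : ℝ} (hτ0 : 0 ≤ τ) (hτ1 : τ < 1) (hb : 0 ≤ b)
    (h : |a - b| ≤ τ * b) : |Real.log b - Real.log a| ≤ -Real.log (1 - τ) := by
  obtain ⟨hlo, hhi⟩ := abs_le.mp h
  rcases hb.eq_or_lt with rfl | hb
  · obtain rfl : a = 0 := by linarith
    simpa using Real.log_nonpos (by linarith) (by linarith)
  have ha : 0 < a := by nlinarith
  have hτ : 0 < 1 - τ := by linarith
  -- both bounds come from `(1 - τ) b ≤ a` and `(1 - τ) a ≤ (1 - τ²) b ≤ b`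
  have hup : Real.log ((1 - τ) * a) ≤ Real.log b := Real.log_le_log (by positivity) (by nlinarith)
  have hdown : Real.log ((1 - τ) * b) ≤ Real.log a := Real.log_le_log (by positivity) (by linarith)
  rw [Real.log_mul hτ.ne' ha.ne'] at hup
  rw [Real.log_mul hτ.ne' hb.ne'] at hdown
  exact abs_le.mpr ⟨by linarith, by linarith⟩

end

namespace ProbabilityTheory

variable {Ω : Type*} [MeasurableSpace Ω] {μ : Measure Ω}

lemma integral_abs_sub_integral_le_sqrt_variance [IsProbabilityMeasure μ] {Z : Ω → ℝ}
    (hZ : MemLp Z 2 μ) : ∫ ω, |Z ω - μ[Z]| ∂μ ≤ √(variance Z μ) := by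
  have hY : MemLp (fun ω => |Z ω - μ[Z]|) 2 μ := (hZ.sub (memLp_const _)).abs
  have hvar := variance_eq_sub hY
  rw [variance_eq_integral hZ.aemeasurable] at *
  simp only [Pi.pow_apply, sq_abs] at hvar
  exact Real.le_sqrt_of_sq_le (by linarith [variance_nonneg (fun ω => |Z ω - μ[Z]|) μ])

lemma IndepFun.measure_prodMk_mem_eq_lintegral [IsFiniteMeasure μ]
    {α β : Type*} [MeasurableSpace α] [MeasurableSpace β] {X : Ω → α} {Y : Ω → β}
    (hXY : IndepFun X Y μ) (hX : Measurable X) (hY : Measurable Y)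
    {B : Set (α × β)} (hB : MeasurableSet B) :
    μ {ω | (X ω, Y ω) ∈ B} = ∫⁻ x, μ {ω | (x, Y ω) ∈ B} ∂(μ.map X) := by
  change μ ((fun ω => (X ω, Y ω)) ⁻¹' B) = _
  rw [← Measure.map_apply (hX.prodMk hY) hB,
    (indepFun_iff_map_prod_eq_prod_map_map hX.aemeasurable hY.aemeasurable).mp hXY,
    Measure.prod_apply hB]
  refine lintegral_congr fun x => ?_
  rw [Measure.map_apply hY (measurable_prodMk_left hB)]
  rfl

lemma measure_union_bound_compl {ι : Type*} [Fintype ι] [IsProbabilityMeasure μ]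
    {B : ι → Set Ω} {S : Set Ω} {ε : ℝ} (hε : 0 ≤ ε) (hB : ∀ i, μ (B i) ≤ ENNReal.ofReal ε)
    (hS : (⋃ i, B i)ᶜ ⊆ S) : 1 - Fintype.card ι * ε ≤ μ.real S := by
  have hunion : μ.real (⋃ i, B i) ≤ Fintype.card ι * ε :=
    calc μ.real (⋃ i, B i) ≤ ∑ i, μ.real (B i) := measureReal_iUnion_fintype_le B
      _ ≤ ∑ _i : ι, ε := Finset.sum_le_sum fun i _ => ENNReal.toReal_le_of_le_ofReal hε (hB i)
      _ = Fintype.card ι * ε := by simp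
  have hcover : 1 ≤ μ.real (⋃ i, B i) + μ.real S :=
    calc 1 = μ.real ((⋃ i, B i) ∪ (⋃ i, B i)ᶜ) := by rw [Set.union_compl_self, probReal_univ]
      _ ≤ μ.real (⋃ i, B i) + μ.real (⋃ i, B i)ᶜ := measureReal_union_le _ _
      _ ≤ μ.real (⋃ i, B i) + μ.real S := by gcongr; finiteness
  linarith

lemma IndepFun.measure_lt_abs_sub_le [IsFiniteMeasure μ]
    {α β : Type*} [MeasurableSpace α] [MeasurableSpace β] {ν : Measure α}
    {X : Ω → α} {Y : Ω → β} (hXY : IndepFun X Y μ) (hX : Measurable X) (hY : Measurable Y)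
    {p : α → ℝ} (hp : Measurable p) (hp0 : 0 ≤ p)
    (hlaw : μ.map X = ν.withDensity fun x => ENNReal.ofReal (p x))
    {F : α → β → ℝ} (hF : Measurable (Function.uncurry F))
    (hFint : ∀ x, Integrable (fun ω => F x (Y ω)) μ) {A τ : ℝ} (hτ : 0 < τ)
    (hA : ∀ x, ∫ ω, |F x (Y ω) - p x| ∂μ ≤ A) :
    μ {ω | τ * p (X ω) < |F (X ω) (Y ω) - p (X ω)|} ≤
      ENNReal.ofReal (A / τ) * ν (Function.support p) := by
  have hB : MeasurableSet {z : α × β | τ * p z.1 < |F z.1 z.2 - p z.1|} :=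
    measurableSet_lt (by fun_prop) ((hF.sub (hp.comp measurable_fst)).abs)
  have hpointwise : ∀ x, ENNReal.ofReal (p x) * μ {ω | τ * p x < |F x (Y ω) - p x|} ≤
      (Function.support p).indicator (fun _ => ENNReal.ofReal (A / τ)) x := by
    intro x
    rcases (hp0 x).eq_or_lt with hx | hx
    · simp [← hx]
    have hmarkov := measure_lt_le_ofReal_integral_div (f := fun ω => |F x (Y ω) - p x|)
      (fun ω => abs_nonneg _) ((hFint x).sub (integrable_const (p x))).abs (mul_pos hτ hx)
    calc ENNReal.ofReal (p x) * μ {ω | τ * p x < |F x (Y ω) - p x|}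
        ≤ ENNReal.ofReal (p x) * ENNReal.ofReal (A / (τ * p x)) := by
          gcongr
          exact hmarkov.trans (ENNReal.ofReal_le_ofReal
            (div_le_div_of_nonneg_right (hA x) (mul_pos hτ hx).le))
      _ = _ := by
          rw [Set.indicator_of_mem hx.ne', ← ENNReal.ofReal_mul hx.le]
          congr 1
          field_simp
          exact mul_div_cancel_left₀ A hx.ne'
  calc μ {ω | τ * p (X ω) < |F (X ω) (Y ω) - p (X ω)|}
      = ∫⁻ x, μ {ω | τ * p x < |F x (Y ω) - p x|} ∂(μ.map X) :=
        hXY.measure_prodMk_mem_eq_lintegral hX hY hB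
    _ ≤ ∫⁻ x, ENNReal.ofReal (p x) * μ {ω | τ * p x < |F x (Y ω) - p x|} ∂ν := by
        rw [hlaw]; exact lintegral_withDensity_le_lintegral_mul ν hp.ennreal_ofReal _
    _ ≤ ∫⁻ x, (Function.support p).indicator (fun _ => ENNReal.ofReal (A / τ)) x ∂ν :=
        lintegral_mono hpointwise
    _ = ENNReal.ofReal (A / τ) * ν (Function.support p) :=
        lintegral_indicator_const (measurableSet_support hp) _

lemma iIndepFun.indepFun_sumElim_inl_pi_s9 {ι ι' β : Type*} [Fintype ι'] [MeasurableSpace β]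
    {X : ι → Ω → β} {X' : ι' → Ω → β} (h : iIndepFun (Sum.elim X X') μ)
    (hX : ∀ i, Measurable (X i)) (hX' : ∀ j, Measurable (X' j)) (i : ι) :
    IndepFun (X i) (fun ω j => X' j ω) μ := by
  classical
  have hmeas : ∀ k, Measurable (Sum.elim X X' k) := by
    rintro (k | k)
    exacts [hX k, hX' k]
  exact (h.indepFun_finset {Sum.inl i} (Finset.univ.image Sum.inr) (by simp) hmeas).comp
    (φ := fun v => v ⟨Sum.inl i, Finset.mem_singleton_self _⟩)
    (ψ := fun v j => v ⟨Sum.inr j, Finset.mem_image_of_mem _ (Finset.mem_univ j)⟩)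
    (_mγ := inferInstance) (_mγ' := inferInstance)
    (measurable_pi_apply _) (measurable_pi_lambda _ fun j => measurable_pi_apply _)

end ProbabilityTheory

section KernelDensityEstimator

variable {d : ℕ} {p κ : (Fin d → ℝ) → ℝ} {w : ℝ}

lemma integral_mul_kernel_sub_eq (hw : 0 < w) (x : Fin d → ℝ) :
    ∫ u, p u * κ (w⁻¹ • (x - u)) = w ^ d * ∫ y, κ y * p (x - w • y) := by
  have hshift : ∫ u, p u * κ (w⁻¹ • (x - u)) = ∫ u, p (x - u) * κ (w⁻¹ • u) := by
    rw [← integral_sub_left_eq_self (fun u => p (x - u) * κ (w⁻¹ • u)) volume x]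
    simp only [sub_sub_cancel]
  have hscale :
      ∫ u, p (x - u) * κ (w⁻¹ • u) = ∫ u, (fun y => κ y * p (x - w • y)) (w⁻¹ • u) := by
    congr 1 with u
    simp only [smul_inv_smul₀ hw.ne', mul_comm]
  rw [hshift, hscale,
    Measure.integral_comp_inv_smul_of_nonneg volume (fun y => κ y * p (x - w • y)) hw.le]
  simp only [Module.finrank_fintype_fun_eq_card, Fintype.card_fin, smul_eq_mul]

lemma integral_kernel_sample_eq {Ω : Type*} [MeasurableSpace Ω] {μ : Measure Ω}
    {Y : Ω → Fin d → ℝ} (hY : Measurable Y) (hp : Measurable p) (hp0 : ∀ x, 0 ≤ p x)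
    (hlaw : μ.map Y = volume.withDensity fun x => ENNReal.ofReal (p x))
    (hκ : Measurable κ) (hw : 0 < w) (x : Fin d → ℝ) :
    ∫ ω, κ (w⁻¹ • (x - Y ω)) ∂μ = w ^ d * ∫ y, κ y * p (x - w • y) := by
  rw [← integral_map (f := fun u => κ (w⁻¹ • (x - u))) hY.aemeasurable
      (hκ.comp (by fun_prop)).aestronglyMeasurable, hlaw,
    integral_withDensity_eq_integral_toReal_smul hp.ennreal_ofReal
      (ae_of_all _ fun _ => ENNReal.ofReal_lt_top)]
  simp only [ENNReal.toReal_ofReal (hp0 _), smul_eq_mul]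
  exact integral_mul_kernel_sub_eq hw x

lemma parzen_mem_Icc {Ω : Type} {M : ℕ} {K : ℝ} (hκ0 : ∀ x, 0 ≤ κ x) (hκK : ∀ x, κ x ≤ K)
    (hw : 0 < w) (hM : 0 < M) (X' : Fin M → Ω → Fin d → ℝ) (x : Fin d → ℝ) (ω : Ω) :
    parzen w κ X' x ω ∈ Set.Icc 0 (K / w ^ d) := by
  have hsum : ∑ m, κ (w⁻¹ • (x - X' m ω)) ≤ M * K := by
    simpa using Finset.sum_le_sum fun m (_ : m ∈ Finset.univ) => hκK (w⁻¹ • (x - X' m ω))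
  have hMpos : (0 : ℝ) < M := Nat.cast_pos.mpr hM
  refine ⟨mul_nonneg (by positivity) (Finset.sum_nonneg fun m _ => hκ0 _), ?_⟩
  calc parzen w κ X' x ω ≤ 1 / (M * w ^ d) * (M * K) := by
        unfold parzen; gcongr
    _ = K / w ^ d := by field_simp

variable {Ω : Type} [MeasurableSpace Ω] {μ : Measure Ω} {M : ℕ} {K : ℝ}
    {X' : Fin M → Ω → Fin d → ℝ}

lemma measurable_parzen (hκ : Measurable κ) (hX' : ∀ m, Measurable (X' m)) :
    Measurable (Function.uncurry (parzen w κ X')) :=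
  measurable_const.mul <| Finset.measurable_sum _ fun m _ =>
    hκ.comp (((measurable_fst.sub ((hX' m).comp measurable_snd)).const_smul w⁻¹))

lemma memLp_parzen [IsFiniteMeasure μ] (hκ : Measurable κ) (hκ0 : ∀ x, 0 ≤ κ x)
    (hκK : ∀ x, κ x ≤ K) (hw : 0 < w) (hM : 0 < M) (hX' : ∀ m, Measurable (X' m))
    (x : Fin d → ℝ) (q : ℝ≥0∞) : MemLp (parzen w κ X' x) q μ :=
  memLp_of_bounded (ae_of_all _ (parzen_mem_Icc hκ0 hκK hw hM X' x))
    ((measurable_parzen hκ hX').comp measurable_prodMk_left).aestronglyMeasurable q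

lemma variance_parzen_le [IsProbabilityMeasure μ] (hκ : Measurable κ) (hκ0 : ∀ x, 0 ≤ κ x)
    (hκK : ∀ x, κ x ≤ K) (hw : 0 < w) (hM : 0 < M) (hX' : ∀ m, Measurable (X' m))
    (hindep : Pairwise fun m m' => IndepFun (X' m) (X' m') μ) (x : Fin d → ℝ) :
    variance (parzen w κ X' x) μ ≤ (K / (w ^ d * (2 * √M))) ^ 2 := by
  set Y : Fin M → Ω → ℝ := fun m ω => κ (w⁻¹ • (x - X' m ω))
  have hYmeas : ∀ m, Measurable (Y m) := fun m => hκ.comp (by fun_prop)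
  have hYmem : ∀ m, ∀ᵐ ω ∂μ, Y m ω ∈ Set.Icc 0 K := fun m => ae_of_all _ fun ω =>
    ⟨hκ0 _, hκK _⟩
  have hvarY : ∀ m, variance (Y m) μ ≤ (K / 2) ^ 2 := fun m => by
    simpa using variance_le_sq_of_bounded (hYmem m) (hYmeas m).aemeasurable
  have hvar_sum : variance (∑ m, Y m) μ = ∑ m, variance (Y m) μ :=
    IndepFun.variance_sum
      (fun m _ => memLp_of_bounded (hYmem m) (hYmeas m).aestronglyMeasurable 2)
      (fun m _ m' _ hmm' => (hindep hmm').comp (φ := fun v => κ (w⁻¹ • (x - v)))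
        (ψ := fun v => κ (w⁻¹ • (x - v))) (hκ.comp (by fun_prop)) (hκ.comp (by fun_prop)))
  have hparzen : parzen w κ X' x = fun ω => 1 / (M * w ^ d) * (∑ m, Y m) ω := by
    ext ω; simp [parzen, Y, Finset.sum_apply]
  have hMpos : (0 : ℝ) < M := Nat.cast_pos.mpr hM
  rw [hparzen, variance_const_mul, hvar_sum]
  calc (1 / (M * w ^ d)) ^ 2 * ∑ m, variance (Y m) μ
      ≤ (1 / (M * w ^ d)) ^ 2 * (M * (K / 2) ^ 2) := by
        gcongr
        simpa using Finset.sum_le_sum fun m (_ : m ∈ Finset.univ) => hvarY m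
    _ = (K / (w ^ d * (2 * √M))) ^ 2 := by
        field_simp
        rw [Real.sq_sqrt hMpos.le]
        ring

lemma abs_integral_kernel_mul_sub_le {L : ℝ} (hp : Measurable p)
    (hLip : ∀ x y, |p x - p y| ≤ L * ∑ k, |x k - y k|) (hκ : Measurable κ)
    (hκ0 : ∀ x, 0 ≤ κ x) (hκint : ∫ x, κ x = 1)
    (hmoment : Integrable fun u => (∑ k, |u k|) * κ u) (hw : 0 < w) (x : Fin d → ℝ) :
    |(∫ y, κ y * p (x - w • y)) - p x| ≤ L * (∫ u, (∑ k, |u k|) * κ u) * w := by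
  have hκInt : Integrable κ := Integrable.of_integral_ne_zero (by rw [hκint]; exact one_ne_zero)
  have hlip : ∀ y, κ y * |p (x - w • y) - p x| ≤ L * w * ((∑ k, |y k|) * κ y) := fun y => by
    have h := hLip (x - w • y) x
    simp only [Pi.sub_apply, Pi.smul_apply, smul_eq_mul, sub_sub_cancel_left, abs_neg,
      abs_mul, abs_of_pos hw, ← Finset.mul_sum] at h
    calc κ y * |p (x - w • y) - p x| ≤ κ y * (L * (w * ∑ k, |y k|)) := by gcongr; exact hκ0 y
      _ = L * w * ((∑ k, |y k|) * κ y) := by ring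
  have hdiff : Integrable fun y => κ y * (p (x - w • y) - p x) :=
    (hmoment.const_mul (L * w)).mono' (by fun_prop) (ae_of_all _ fun y => by
      simpa only [Real.norm_eq_abs, abs_mul, abs_of_nonneg (hκ0 y)] using hlip y)
  have hrepr : ∫ y, κ y * (p (x - w • y) - p x) = (∫ y, κ y * p (x - w • y)) - p x := by
    have hfull : Integrable fun y => κ y * p (x - w • y) :=
      (hdiff.add (hκInt.mul_const (p x))).congr (ae_of_all _ fun y => by
        simp only [Pi.add_apply]; ring)
    simp_rw [mul_sub]
    rw [integral_sub hfull (hκInt.mul_const _), integral_mul_const, hκint, one_mul]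
  calc |(∫ y, κ y * p (x - w • y)) - p x| ≤ ∫ y, κ y * |p (x - w • y) - p x| := by
        rw [← hrepr]
        simpa only [Real.norm_eq_abs, abs_mul, abs_of_nonneg (hκ0 _)] using
          norm_integral_le_integral_norm fun y => κ y * (p (x - w • y) - p x)
    _ ≤ ∫ y, L * w * ((∑ k, |y k|) * κ y) :=
        integral_mono_of_nonneg (ae_of_all _ fun y => mul_nonneg (hκ0 y) (abs_nonneg _))
          (hmoment.const_mul _) (ae_of_all _ hlip)
    _ = L * (∫ u, (∑ k, |u k|) * κ u) * w := by rw [integral_const_mul]; ring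

lemma integral_parzen_eq [IsFiniteMeasure μ] (hp : Measurable p) (hp0 : ∀ x, 0 ≤ p x)
    (hκ : Measurable κ) (hκ0 : ∀ x, 0 ≤ κ x) (hκK : ∀ x, κ x ≤ K) (hw : 0 < w) (hM : 0 < M)
    (hX' : ∀ m, Measurable (X' m))
    (hlaw : ∀ m, μ.map (X' m) = volume.withDensity fun x => ENNReal.ofReal (p x))
    (x : Fin d → ℝ) : ∫ ω, parzen w κ X' x ω ∂μ = ∫ y, κ y * p (x - w • y) := by
  have hint : ∀ m, Integrable (fun ω => κ (w⁻¹ • (x - X' m ω))) μ := fun m =>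
    (memLp_of_bounded (a := 0) (b := K) (ae_of_all _ fun ω => ⟨hκ0 _, hκK _⟩)
      (hκ.comp (by fun_prop)).aestronglyMeasurable 2).integrable one_le_two
  have hMpos : (0 : ℝ) < M := Nat.cast_pos.mpr hM
  simp only [parzen]
  rw [integral_const_mul, integral_finsetSum _ fun m _ => hint m]
  simp only [integral_kernel_sample_eq (hX' _) hp hp0 (hlaw _) hκ hw x, Finset.sum_const,
    Finset.card_univ, Fintype.card_fin, nsmul_eq_mul]
  field_simp

lemma integral_abs_parzen_sub_le [IsProbabilityMeasure μ] {L : ℝ} (hp : Measurable p)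
    (hp0 : ∀ x, 0 ≤ p x) (hLip : ∀ x y, |p x - p y| ≤ L * ∑ k, |x k - y k|)
    (hκ : Measurable κ) (hκ0 : ∀ x, 0 ≤ κ x) (hκK : ∀ x, κ x ≤ K) (hκint : ∫ x, κ x = 1)
    (hmoment : Integrable fun u => (∑ k, |u k|) * κ u) (hw : 0 < w) (hM : 0 < M)
    (hX' : ∀ m, Measurable (X' m))
    (hlaw : ∀ m, μ.map (X' m) = volume.withDensity fun x => ENNReal.ofReal (p x))
    (hindep : Pairwise fun m m' => IndepFun (X' m) (X' m') μ) (x : Fin d → ℝ) :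
    ∫ ω, |parzen w κ X' x ω - p x| ∂μ ≤
      K / (w ^ d * (2 * √M)) + L * (∫ u, (∑ k, |u k|) * κ u) * w := by
  set S := parzen w κ X' x
  have hSmem : MemLp S 2 μ := memLp_parzen hκ hκ0 hκK hw hM hX' x 2
  have hS : Integrable S μ := hSmem.integrable one_le_two
  have hK : 0 ≤ K := (hκ0 0).trans (hκK 0)
  have hfluct : ∫ ω, |S ω - μ[S]| ∂μ ≤ K / (w ^ d * (2 * √M)) :=
    (integral_abs_sub_integral_le_sqrt_variance hSmem).trans <|
      (Real.sqrt_le_sqrt (variance_parzen_le hκ hκ0 hκK hw hM hX' hindep x)).trans_eq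
        (Real.sqrt_sq (by positivity))
  have hbias : |μ[S] - p x| ≤ L * (∫ u, (∑ k, |u k|) * κ u) * w := by
    rw [integral_parzen_eq hp hp0 hκ hκ0 hκK hw hM hX' hlaw x]
    exact abs_integral_kernel_mul_sub_le hp hLip hκ hκ0 hκint hmoment hw x
  have hdev : Integrable (fun ω => |S ω - μ[S]|) μ := (hS.sub (integrable_const _)).abs
  calc ∫ ω, |S ω - p x| ∂μ ≤ ∫ ω, (|S ω - μ[S]| + |μ[S] - p x|) ∂μ :=
        integral_mono (hS.sub (integrable_const _)).abs (hdev.add (integrable_const _))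
          fun ω => abs_sub_le _ _ _
    _ = ∫ ω, |S ω - μ[S]| ∂μ + |μ[S] - p x| := by
        rw [integral_add hdev (integrable_const _), integral_const, probReal_univ, one_smul]
    _ ≤ _ := add_le_add hfluct hbias

lemma volume_support_le_one (hpsupp : ∀ x, x ∉ Set.Icc (0 : Fin d → ℝ) 1 → p x = 0) :
    volume (Function.support p) ≤ 1 :=
  (measure_mono (t := Set.Icc 0 1) fun x (hx : p x ≠ 0) =>
    by_contra fun h => hx (hpsupp x h)).trans_eq (by simp [Real.volume_Icc_pi])

lemma measure_lt_abs_parzen_sub_le [IsFiniteMeasure μ] {A τ : ℝ} {X₀ : Ω → Fin d → ℝ}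
    (hp : Measurable p) (hp0 : ∀ x, 0 ≤ p x)
    (hpsupp : ∀ x, x ∉ Set.Icc (0 : Fin d → ℝ) 1 → p x = 0) (hκ : Measurable κ)
    (hκ0 : ∀ x, 0 ≤ κ x) (hκK : ∀ x, κ x ≤ K) (hw : 0 < w) (hM : 0 < M) (hX₀ : Measurable X₀)
    (hX' : ∀ m, Measurable (X' m))
    (hlaw : μ.map X₀ = volume.withDensity fun x => ENNReal.ofReal (p x))
    (hindep : IndepFun X₀ (fun ω m => X' m ω) μ) (hτ : 0 < τ)
    (hA : ∀ x, ∫ ω, |parzen w κ X' x ω - p x| ∂μ ≤ A) :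
    μ {ω | τ * p (X₀ ω) < |parzen w κ X' (X₀ ω) ω - p (X₀ ω)|} ≤ ENNReal.ofReal (A / τ) :=
  -- `p̂(x)` as a function of the sample tuple, read through the coordinate projections
  (hindep.measure_lt_abs_sub_le hX₀ (measurable_pi_lambda _ hX') hp hp0 hlaw
    (F := parzen w κ fun m v => v m) (measurable_parzen hκ fun m => measurable_pi_apply m)
    (fun x => (memLp_parzen hκ hκ0 hκK hw hM hX' x 1).integrable le_rfl) hτ hA).trans
    (mul_le_of_le_one_right' (volume_support_le_one hpsupp))

end KernelDensityEstimator

lemma abs_entropyEstimate_add_le {Ω : Type} {d N M : ℕ} {w τ : ℝ} {p κ : (Fin d → ℝ) → ℝ}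
    {X : Fin N → Ω → Fin d → ℝ} {X' : Fin M → Ω → Fin d → ℝ} {ω : Ω} (hτ0 : 0 ≤ τ) (hτ1 : τ < 1)
    (hp0 : ∀ x, 0 ≤ p x) (h : ∀ n, |parzen w κ X' (X n ω) ω - p (X n ω)| ≤ τ * p (X n ω)) :
    |entropyEstimate w κ X X' ω + (1 / N : ℝ) * ∑ n, Real.log (p (X n ω))| ≤
      -Real.log (1 - τ) := by
  have hc : 0 ≤ -Real.log (1 - τ) := neg_nonneg.mpr (Real.log_nonpos (by linarith) (by linarith))
  rcases Nat.eq_zero_or_pos N with rfl | hN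
  · simpa [entropyEstimate] using hc
  have hterm : ∀ n, |Real.log (p (X n ω)) - Real.log (parzen w κ X' (X n ω) ω)| ≤
      -Real.log (1 - τ) := fun n =>
    abs_log_sub_log_le_neg_log_one_sub hτ0 hτ1 (hp0 _) (h n)
  have hNpos : (0 : ℝ) < N := Nat.cast_pos.mpr hN
  have hrepr : entropyEstimate w κ X X' ω + (1 / N : ℝ) * ∑ n, Real.log (p (X n ω)) =
      1 / N * ∑ n, (Real.log (p (X n ω)) - Real.log (parzen w κ X' (X n ω) ω)) := by
    rw [entropyEstimate, Finset.sum_sub_distrib]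
    ring
  calc |entropyEstimate w κ X X' ω + (1 / N : ℝ) * ∑ n, Real.log (p (X n ω))|
      = 1 / N * |∑ n, (Real.log (p (X n ω)) - Real.log (parzen w κ X' (X n ω) ω))| := by
        rw [hrepr, abs_mul, abs_of_pos (one_div_pos.mpr hNpos)]
    _ ≤ 1 / N * ∑ _n : Fin N, -Real.log (1 - τ) := by
        gcongr
        exact (Finset.abs_sum_le_sum_abs _ _).trans (Finset.sum_le_sum fun n _ => hterm n)
    _ = -Real.log (1 - τ) := by simp [hNpos.ne']

lemma one_div_two_mul_sqrt_le_sqrt_log {N M : ℕ} {δ : ℝ} (hN : 0 < N) (hδ : 0 < δ)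
    (hδ' : δ ≤ 3 / 2) : 1 / (2 * √M) ≤ √(Real.log (6 * N / δ) / (2 * M)) := by
  have h4 : (4 : ℝ) ≤ 6 * N / δ := by
    have : (1 : ℝ) ≤ N := by exact_mod_cast hN
    rw [le_div_iff₀ hδ]
    nlinarith
  have hlog : 1 / 2 ≤ Real.log (6 * N / δ) := by
    rw [Real.le_log_iff_exp_le (by linarith)]
    calc Real.exp (1 / 2) ≤ Real.exp 1 := Real.exp_le_exp.mpr (by norm_num)
      _ ≤ 4 := by linarith [Real.exp_one_lt_d9]
      _ ≤ 6 * N / δ := h4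
  apply Real.le_sqrt_of_sq_le
  calc (1 / (2 * √M)) ^ 2 = (1 / 2) / (2 * M) := by
        rw [div_pow, mul_pow, Real.sq_sqrt (Nat.cast_nonneg M)]
        ring
    _ ≤ Real.log (6 * N / δ) / (2 * M) := by gcongr

lemma kernel_risk_le_mul {d N M : ℕ} {K C w δ : ℝ} (hK : 0 ≤ K) (hw : 0 < w) (hN : 0 < N)
    (hδ : 0 < δ) (hδ' : δ ≤ 3 / 2) :
    K / (w ^ d * (2 * √M)) + C * w ≤
      (3 * N * K / (w ^ d * δ) * √(Real.log (6 * N / δ) / (2 * M)) + 3 * N * C * w / δ) *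
        (δ / (3 * N)) := by
  have hNpos : (0 : ℝ) < N := Nat.cast_pos.mpr hN
  calc K / (w ^ d * (2 * √M)) + C * w = K / w ^ d * (1 / (2 * √M)) + C * w := by
        rw [div_mul_div_comm, mul_one]
    _ ≤ K / w ^ d * √(Real.log (6 * N / δ) / (2 * M)) + C * w := by
        gcongr
        exact one_div_two_mul_sqrt_le_sqrt_log hN hδ hδ'
    _ = _ := by
        field_simp

theorem knife_empirical_sum_bound_general {d : ℕ} (L δ : ℝ) (hL : 0 < L) (hδ : 0 < δ)
    (p κ : (Fin d → ℝ) → ℝ)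
    (hp0 : ∀ x, 0 ≤ p x) (hpmeas : Measurable p)
    (hpsupp : ∀ x, x ∉ Set.Icc (0 : Fin d → ℝ) 1 → p x = 0)
    (hLip : ∀ x y, |p x - p y| ≤ L * ∑ k, |x k - y k|)
    (hκ0 : ∀ x, 0 ≤ κ x) (hκmeas : Measurable κ)
    (hκsupp : ∀ x, x ∉ Set.Icc (0 : Fin d → ℝ) 1 → κ x = 0)
    (hκint : ∫ x, κ x = 1)
    (C₂ : ℝ) (hC₂int : Integrable fun u => (∑ k, |u k|) * κ u)
    (hC₂ : C₂ = L * ∫ u, (∑ k, |u k|) * κ u)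
    (Kmax : ℝ) (hKmax : IsGreatest (κ '' Set.Icc (0 : Fin d → ℝ) 1) Kmax)
    (Ω : Type) [MeasurableSpace Ω] (μ : Measure Ω) [IsProbabilityMeasure μ]
    (N M : ℕ) (hN : 0 < N) (hM : 0 < M)
    (X : Fin N → Ω → (Fin d → ℝ)) (X' : Fin M → Ω → (Fin d → ℝ))
    (hXmeas : ∀ n, Measurable (X n)) (hX'meas : ∀ m, Measurable (X' m))
    (hindep : iIndepFun (Sum.elim X X') μ)
    (hXlaw : ∀ n, Measure.map (X n) μ = volume.withDensity fun x => ENNReal.ofReal (p x))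
    (hX'law : ∀ m, Measure.map (X' m) μ = volume.withDensity fun x => ENNReal.ofReal (p x))
    (w : ℝ) (hw : 0 < w)
    (hpos : 0 < 1 - 3 * N * Kmax / (w ^ d * δ) * Real.sqrt (Real.log (6 * N / δ) / (2 * M))
        - 3 * N * C₂ * w / δ) :
    1 - 2 * δ / 3 <
      (μ {ω | |entropyEstimate w κ X X' ω + (1 / N : ℝ) * ∑ n, Real.log (p (X n ω))| ≤
        -Real.log (1 - 3 * N * Kmax / (w ^ d * δ) * Real.sqrt (Real.log (6 * N / δ) / (2 * M))
          - 3 * N * C₂ * w / δ)}).toReal := by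
  rcases lt_or_ge (3 / 2 : ℝ) δ with hδ' | hδ'
  · exact (by linarith : 1 - 2 * δ / 3 < 0).trans_le ENNReal.toReal_nonneg
  have hκK := le_of_isGreatest_image_of_nonneg_of_eq_zero hKmax hκ0 hκsupp
  have hKpos : 0 < Kmax :=
    pos_of_forall_le_of_integral_ne_zero hκK hκ0 (hκint ▸ one_ne_zero)
  have hC₂0 : 0 ≤ C₂ := hC₂ ▸ mul_nonneg hL.le
    (integral_nonneg fun u => mul_nonneg (Finset.sum_nonneg fun k _ => abs_nonneg _) (hκ0 u))
  rw [sub_sub] at hpos ⊢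
  set τ := 3 * N * Kmax / (w ^ d * δ) * √(Real.log (6 * N / δ) / (2 * M)) + 3 * N * C₂ * w / δ
  have hrisk : Kmax / (w ^ d * (2 * √M)) + C₂ * w ≤ τ * (δ / (3 * N)) :=
    kernel_risk_le_mul hKpos.le hw hN hδ hδ'
  have hτ : 0 < τ :=
    pos_of_mul_pos_left ((by positivity : (0 : ℝ) < _).trans_le hrisk) (by positivity)
  have hbad : ∀ n, μ {ω | τ * p (X n ω) < |parzen w κ X' (X n ω) ω - p (X n ω)|} ≤
      ENNReal.ofReal (δ / (3 * N)) := fun n =>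
    (measure_lt_abs_parzen_sub_le hpmeas hp0 hpsupp hκmeas hκ0 hκK hw hM (hXmeas n) hX'meas
      (hXlaw n) (hindep.indepFun_sumElim_inl_pi_s9 hXmeas hX'meas n) hτ fun x =>
        hC₂ ▸ integral_abs_parzen_sub_le hpmeas hp0 hLip hκmeas hκ0 hκK hκint hC₂int hw hM
          hX'meas hX'law (fun m m' h => hindep.indepFun (Sum.inr_injective.ne h)) x).trans
      (ENNReal.ofReal_le_ofReal
        (div_le_of_le_mul₀ hτ.le (by positivity) (hrisk.trans_eq (mul_comm _ _))))
  have hNpos : (0 : ℝ) < N := Nat.cast_pos.mpr hN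
  refine lt_of_lt_of_le ?_ (measure_union_bound_compl (by positivity) hbad fun ω hω =>
    abs_entropyEstimate_add_le hτ.le (by linarith) hp0 fun n =>
      not_lt.mp fun h => hω (Set.mem_iUnion.mpr ⟨n, h⟩))
  have hunion : (N : ℝ) * (δ / (3 * N)) = δ / 3 := by field_simp
  rw [Fintype.card_fin, hunion]
  linarith

/-- **Lemma (uniform plug-in error bound).** For `p ∈ 𝒫_L`, a kernel density `κ` supported
on `[0,1]ᵈ` with constants `C₂` and `K_max` finite, i.i.d. samples `X'₁, …, X'_M ∼ p` and
`X₁, …, X_N ∼ p` independent of each other, a bandwidth `w > 0`, and `δ > 0` such that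
`1 - (3 N K_max/(wᵈ δ)) √(log(6N/δ)/(2M)) - 3 N C₂ w/δ > 0`, with probability greater than
`1 - 2δ/3` it holds that `|Ĥ(𝒟; w) + (1/N) ∑ₙ log p(Xₙ)| ≤
-log(1 - (3 N K_max/(wᵈ δ)) √(log(6N/δ)/(2M)) - 3 N C₂ w/δ)`. -/
theorem knife_empirical_sum_bound {d : ℕ} (L δ : ℝ) (hL : 0 < L) (hδ : 0 < δ)
    (p κ : (Fin d → ℝ) → ℝ)
    (hp0 : ∀ x, 0 ≤ p x) (hpmeas : Measurable p)
    (hpsupp : ∀ x, x ∉ Set.Icc (0 : Fin d → ℝ) 1 → p x = 0)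
    (hpint : ∫ x, p x = 1)
    (hLip : ∀ x y, |p x - p y| ≤ L * ∑ k, |x k - y k|)
    (hκ0 : ∀ x, 0 ≤ κ x) (hκmeas : Measurable κ)
    (hκsupp : ∀ x, x ∉ Set.Icc (0 : Fin d → ℝ) 1 → κ x = 0)
    (hκint : ∫ x, κ x = 1)
    (C₂ : ℝ) (hC₂int : Integrable fun u => (∑ k, |u k|) * κ u)
    (hC₂ : C₂ = L * ∫ u, (∑ k, |u k|) * κ u)
    (Kmax : ℝ) (hKmax : IsGreatest (κ '' Set.Icc (0 : Fin d → ℝ) 1) Kmax)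
    (Ω : Type) [MeasurableSpace Ω] (μ : Measure Ω) [IsProbabilityMeasure μ]
    (N M : ℕ) (hN : 0 < N) (hM : 0 < M)
    (X : Fin N → Ω → (Fin d → ℝ)) (X' : Fin M → Ω → (Fin d → ℝ))
    (hXmeas : ∀ n, Measurable (X n)) (hX'meas : ∀ m, Measurable (X' m))
    (hindep : iIndepFun (Sum.elim X X') μ)
    (hXlaw : ∀ n, Measure.map (X n) μ = volume.withDensity fun x => ENNReal.ofReal (p x))
    (hX'law : ∀ m, Measure.map (X' m) μ = volume.withDensity fun x => ENNReal.ofReal (p x))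
    (w : ℝ) (hw : 0 < w)
    (hpos : 0 < 1 - 3 * N * Kmax / (w ^ d * δ) * Real.sqrt (Real.log (6 * N / δ) / (2 * M))
        - 3 * N * C₂ * w / δ) :
    1 - 2 * δ / 3 <
      (μ {ω | |entropyEstimate w κ X X' ω + (1 / N : ℝ) * ∑ n, Real.log (p (X n ω))| ≤
        -Real.log (1 - 3 * N * Kmax / (w ^ d * δ) * Real.sqrt (Real.log (6 * N / δ) / (2 * M))
          - 3 * N * C₂ * w / δ)}).toReal :=
  knife_empirical_sum_bound_general L δ hL hδ p κ hp0 hpmeas hpsupp hLip hκ0 hκmeas hκsupp hκint C₂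
    hC₂int hC₂ Kmax hKmax Ω μ N M hN hM X X' hXmeas hX'meas hindep hXlaw hX'law w hw hpos
end
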